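/- arXiv:2507.14955 — 2 statements merged into one kernel-verified Lean document; each statement's English description precedes it below -/
import Mathlib

section
/- There exists η > 0 depending only on a, b, c such that for every symmetric traceless real 3×3 matrix Q with f(Q) < η, the two largest eigenvalues of Q are distinct: λ₁(Q) > λ₂(Q), where λ₁(Q) ≥ λ₂(Q) ≥ λ₃(Q) denote the eigenvalues of Q in decreasing order. -/
noncomputable section

open Matrix MeasureTheory Metric Set

attribute [local instance] Matrix.normedAddCommGroup Matrix.normedSpace

abbrev E3 : Type := EuclideanSpace ℝ (Fin 3)
abbrev M3 : Type := Matrix (Fin 3) (Fin 3) ℝ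

/-- The space of symmetric traceless real 3×3 matrices. -/
def S0 : Set M3 := {Q | Q.IsSymm ∧ Q.trace = 0}

def sstar (a b c : ℝ) : ℝ := (b + Real.sqrt (b ^ 2 + 24 * a * c)) / (4 * c)

def kconst (a b c : ℝ) : ℝ :=
  sstar a b c ^ 2 / 27 * (9 * a + 2 * b * sstar a b c - 3 * c * sstar a b c ^ 2)

/-- Bulk potential. -/
def fbulk (a b c : ℝ) (Q : M3) : ℝ :=
  kconst a b c - a / 2 * (Q * Q).trace - b / 3 * (Q * Q * Q).trace
    + c / 4 * ((Q * Q).trace) ^ 2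

/-- Partial derivative `∂ₖ Q` (componentwise). -/
def pd (Q : E3 → M3) (k : Fin 3) (x : E3) : M3 :=
  Matrix.of fun i j => fderiv ℝ (fun y => Q y i j) x (EuclideanSpace.single k 1)

/-- Squared Frobenius norm of a matrix. -/
def frobSq (A : M3) : ℝ := ∑ i, ∑ j, (A i j) ^ 2

def frobNorm (A : M3) : ℝ := Real.sqrt (frobSq A)

/-- `|∇Q|²`. -/
def gradSq (Q : E3 → M3) (x : E3) : ℝ := ∑ k : Fin 3, frobSq (pd Q k x)

/-- Energy density `e_ε(Q)`. -/
def eDen (a b c ε : ℝ) (Q : E3 → M3) (x : E3) : ℝ :=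
  1 / 2 * gradSq Q x + 1 / ε ^ 2 * fbulk a b c (Q x)

/-- Energy `E_ε(Q, U)`. -/
def energy (a b c ε : ℝ) (Q : E3 → M3) (U : Set E3) : ℝ :=
  ∫ x in U, eDen a b c ε Q x

/-- Componentwise Laplacian. -/
def lapM (Q : E3 → M3) (x : E3) : M3 :=
  ∑ k : Fin 3, Matrix.of fun i j =>
    fderiv ℝ (fun y => pd Q k y i j) x (EuclideanSpace.single k 1)

/-- `|Q|² = tr(Q²)`. -/
def normSqM (Q : M3) : ℝ := (Q * Q).trace

/-- The Euler–Lagrange equation at a point. -/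
def ELeq (a b c ε : ℝ) (Q : E3 → M3) (x : E3) : Prop :=
  (-(ε ^ 2)) • lapM Q x - a • Q x - b • (Q x * Q x)
    + (b / 3 * normSqM (Q x)) • (1 : M3) + (c * normSqM (Q x)) • Q x = 0

/-- Local minimizer of the Landau–de Gennes energy on an open set `ω`. -/
def IsLDGMin (a b c ε : ℝ) (ω : Set E3) (Q : E3 → M3) : Prop :=
  ∀ (x : E3) (r : ℝ), 0 < r → closedBall x r ⊆ ω →
    ∀ P : E3 → M3, ContDiffOn ℝ (⊤ : ℕ∞) P ω → (∀ y ∈ ω, P y ∈ S0) →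
      (∃ K : Set E3, IsCompact K ∧ K ⊆ ball x r ∧ ∀ y ∉ K, P y = Q y) →
      energy a b c ε Q (ball x r) ≤ energy a b c ε P (ball x r)

/-- The vacuum manifold `N`. -/
def Nman (a b c : ℝ) : Set M3 :=
  {P | ∃ n : Fin 3 → ℝ, (∑ i, (n i) ^ 2) = 1 ∧
    P = sstar a b c • (Matrix.vecMulVec n n - (1 / 3 : ℝ) • (1 : M3))}

/-- Frobenius distance to the vacuum manifold. -/
def distN (a b c : ℝ) (Q : M3) : ℝ :=
  sInf ((fun P => frobNorm (Q - P)) '' Nman a b c)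

/-- Directional derivative `v·∇Q = Σₖ vₖ ∂ₖQ`. -/
def dirD (Q : E3 → M3) (v : E3) (x : E3) : M3 := ∑ k : Fin 3, v k • pd Q k x

/-- Admissible cutoff profile. -/
def AdmissibleCutoff (φ : ℝ → ℝ) : Prop :=
  ContDiff ℝ (⊤ : ℕ∞) φ ∧ (∀ t, 0 ≤ φ t) ∧ (∀ t, 10 ≤ t → φ t = 0) ∧
    (∀ t ∈ Icc (0 : ℝ) 8, 1 ≤ φ t) ∧ φ 0 = 60 ∧
    (∀ t, 0 ≤ t → |deriv φ t| ≤ 100) ∧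
    (∀ t ∈ Icc (0 : ℝ) 8, deriv φ t ∈ Icc (-2 : ℝ) (-1)) ∧
    (∀ t, 0 ≤ t → deriv φ t ≤ 0)

/-- The density `Θ_ρ^φ(Q, x)`. -/
def Theta (a b c ε : ℝ) (φ : ℝ → ℝ) (Q : E3 → M3) (x : E3) (ρ : ℝ) : ℝ :=
  ρ⁻¹ * ∫ y in ball x (Real.sqrt 10 * ρ), eDen a b c ε Q y * φ (‖y - x‖ ^ 2 / ρ ^ 2)

/-- The regular scale `r(Q, x)`. -/
def regScale (a b c ε : ℝ) (Q : E3 → M3) (x : E3) : ℝ :=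
  sSup {ρ : ℝ | 0 ≤ ρ ∧ ρ ≤ 1 ∧ ∀ y ∈ ball x ρ, ρ ^ 2 * eDen a b c ε Q y ≤ 1}

/-- The bad set `Bad(Q; s, δ)`. -/
def badSet (a b c ε : ℝ) (Q : E3 → M3) (s δ : ℝ) : Set E3 :=
  {y | regScale a b c ε Q y < s} ∪ {y | δ < distN a b c (Q y)}



lemma conj_trace' (U A : M3) (hU : Uᵀ * U = 1) : (U * A * Uᵀ).trace = A.trace := by
  rw [Matrix.trace_mul_comm, ← Matrix.mul_assoc, hU, Matrix.one_mul]

lemma conj_mul' (U A B : M3) (hU : Uᵀ * U = 1) :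
    (U * A * Uᵀ) * (U * B * Uᵀ) = U * (A * B) * Uᵀ := by
  simp only [Matrix.mul_assoc]
  rw [← Matrix.mul_assoc Uᵀ U (B * Uᵀ), hU, Matrix.one_mul]

lemma eta_pos' (a b c : ℝ) (ha : 0 ≤ a) (hb : 0 < b) (hc : 0 < c) :
    0 < kconst a b c - a ^ 2 / (4 * c) := by
  rw [kconst, sstar]
  set d := Real.sqrt (b ^ 2 + 24 * a * c) with hd
  have hd2 : d ^ 2 = b ^ 2 + 24 * a * c := Real.sq_sqrt (by positivity)
  have hdb : b ≤ d := by
    have : Real.sqrt (b ^ 2) ≤ d := Real.sqrt_le_sqrt (by nlinarith)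
    rwa [Real.sqrt_sq hb.le] at this
  have haA : a = (d ^ 2 - b ^ 2) / (24 * c) := by field_simp; linarith
  rw [haA]
  have key : (((b + d) / (4 * c)) ^ 2 / 27 *
      (9 * ((d ^ 2 - b ^ 2) / (24 * c)) + 2 * b * ((b + d) / (4 * c))
        - 3 * c * ((b + d) / (4 * c)) ^ 2)) - ((d ^ 2 - b ^ 2) / (24 * c)) ^ 2 / (4 * c)
      = b * (2 * d - b) * (b + d) ^ 2 / (1728 * c ^ 3) := by
    field_simp
    ring
  rw [key]
  have : 0 < 2 * d - b := by linarith
  positivity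

/-- small bulk energy separates the two largest eigenvalues. -/
theorem stmt15 (a b c : ℝ) (ha : 0 ≤ a) (hb : 0 < b) (hc : 0 < c) :
    ∃ η : ℝ, 0 < η ∧
      ∀ Q : M3, Q ∈ S0 → fbulk a b c Q < η →
        ∀ lam : Fin 3 → ℝ, lam 1 ≤ lam 0 → lam 2 ≤ lam 1 →
          (∃ U : M3, U * Uᵀ = 1 ∧ Q = U * Matrix.diagonal lam * Uᵀ) →
          lam 1 < lam 0 := by
  refine ⟨kconst a b c - a ^ 2 / (4 * c), eta_pos' a b c ha hb hc, ?_⟩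
  rintro Q ⟨hsym, htr⟩ hfQ lam h01 h12 ⟨U, hUU, hQ⟩
  by_contra hlt
  have heq : lam 0 = lam 1 := le_antisymm (not_lt.mp hlt) h01
  have hU : Uᵀ * U = 1 := mul_eq_one_comm.mp hUU
  set D := Matrix.diagonal lam with hD
  have e1 : lam 0 + lam 1 + lam 2 = 0 := by
    have := htr
    rw [hQ, conj_trace' U D hU, hD, Matrix.trace_diagonal, Fin.sum_univ_three] at this
    linarith
  have hQ2 : Q * Q = U * (D * D) * Uᵀ := by rw [hQ]; exact conj_mul' U D D hU
  have hQ3 : Q * Q * Q = U * (D * D * D) * Uᵀ := by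
    rw [hQ2, hQ, conj_mul' U (D * D) D hU]
  have hDD : D * D = Matrix.diagonal (fun i => lam i * lam i) := by
    rw [hD, Matrix.diagonal_mul_diagonal]
  have hDDD : D * D * D = Matrix.diagonal (fun i => lam i * lam i * lam i) := by
    rw [hDD, hD, Matrix.diagonal_mul_diagonal]
  have e2 : (Q * Q).trace = lam 0 * lam 0 + lam 1 * lam 1 + lam 2 * lam 2 := by
    rw [hQ2, conj_trace' U (D * D) hU, hDD, Matrix.trace_diagonal, Fin.sum_univ_three]
  have e3 : (Q * Q * Q).trace
      = lam 0 * lam 0 * lam 0 + lam 1 * lam 1 * lam 1 + lam 2 * lam 2 * lam 2 := by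
    rw [hQ3, conj_trace' U (D * D * D) hU, hDDD, Matrix.trace_diagonal, Fin.sum_univ_three]
  set t := lam 1 with htdef
  have hl2 : lam 2 = -2 * t := by linarith
  have ht : 0 ≤ t := by nlinarith [h12]
  have ef : fbulk a b c Q = kconst a b c - 3 * a * t ^ 2 + 2 * b * t ^ 3 + 9 * c * t ^ 4 := by
    rw [fbulk, e2, e3, heq, hl2]; ring
  have hkey : (3 * a * t ^ 2 - 2 * b * t ^ 3 - 9 * c * t ^ 4) * (4 * c) ≤ a ^ 2 := by
    nlinarith [sq_nonneg (6 * c * t ^ 2 - a),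
      mul_nonneg (mul_nonneg hb.le hc.le) (pow_nonneg ht 3)]
  have h4c : (0 : ℝ) < 4 * c := by linarith
  have : 3 * a * t ^ 2 - 2 * b * t ^ 3 - 9 * c * t ^ 4 ≤ a ^ 2 / (4 * c) :=
    (le_div_iff₀ h4c).mpr hkey
  rw [ef] at hfQ; linarith

end
end

section
/- Define g(λ) := k − 3aλ² + 2bλ³ + 9cλ⁴ and λ_* := (−b + √(b²+24ac))/(12c). Then: (i) for every symmetric traceless real 3×3 matrix Q whose eigenvalues are λ, λ, −2λ (so necessarily λ ≥ 0 when λ is the repeated top eigenvalue), one has f(Q) = g(λ); (ii) g(λ) ≥ g(λ_*) for every λ ≥ 0; and (iii) g(λ_*) > 0. -/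
noncomputable section

open Matrix MeasureTheory Metric Set

attribute [local instance] Matrix.normedAddCommGroup Matrix.normedSpace

/-- `g(λ) = k − 3aλ² + 2bλ³ + 9cλ⁴`. -/
def gfun (a b c lam : ℝ) : ℝ :=
  kconst a b c - 3 * a * lam ^ 2 + 2 * b * lam ^ 3 + 9 * c * lam ^ 4

/-- `λ_* = (−b + √(b²+24ac))/(12c)`. -/
def lamStar (a b c : ℝ) : ℝ := (-b + Real.sqrt (b ^ 2 + 24 * a * c)) / (12 * c)

/-- value of `f` on matrices with eigenvalues `λ, λ, −2λ`,
and minimality and positivity of `g(λ_*)`. -/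
theorem stmt16 (a b c : ℝ) (ha : 0 ≤ a) (hb : 0 < b) (hc : 0 < c) :
    (∀ (lam : ℝ) (Q : M3), Q ∈ S0 →
      (∃ U : M3, U * Uᵀ = 1 ∧
        Q = U * Matrix.diagonal ![lam, lam, -2 * lam] * Uᵀ) →
      fbulk a b c Q = gfun a b c lam)
    ∧ (∀ lam : ℝ, 0 ≤ lam → gfun a b c (lamStar a b c) ≤ gfun a b c lam)
    ∧ 0 < gfun a b c (lamStar a b c) := by
  refine ⟨?_, ?_, ?_⟩
  · rintro lam Q - ⟨U, hU, hQ⟩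
    set D : M3 := Matrix.diagonal ![lam, lam, -2 * lam] with hD
    have hU' : Uᵀ * U = 1 := mul_eq_one_comm.mp hU
    have key : ∀ A B : M3, (U * A * Uᵀ) * (U * B * Uᵀ) = U * (A * B) * Uᵀ := by
      intro A B
      calc (U * A * Uᵀ) * (U * B * Uᵀ) = U * (A * ((Uᵀ * U) * (B * Uᵀ))) := by
            simp only [Matrix.mul_assoc]
        _ = U * (A * B) * Uᵀ := by rw [hU']; simp only [Matrix.one_mul, Matrix.mul_assoc]
    have tr : ∀ A : M3, (U * A * Uᵀ).trace = A.trace := by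
      intro A
      rw [Matrix.trace_mul_comm, ← Matrix.mul_assoc, hU', Matrix.one_mul]
    have h2 : (Q * Q).trace = 6 * lam ^ 2 := by
      rw [hQ, key, tr, hD]
      simp [Matrix.diagonal_mul_diagonal, Matrix.trace_diagonal, Fin.sum_univ_three]
      ring
    have h3 : (Q * Q * Q).trace = -6 * lam ^ 3 := by
      rw [hQ, key, key, tr, hD]
      simp [Matrix.diagonal_mul_diagonal, Matrix.trace_diagonal, Fin.sum_univ_three]
      ring
    rw [fbulk, gfun, h2, h3]; ring
  all_goals {
    set t := Real.sqrt (b ^ 2 + 24 * a * c) with hset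
    have hDnn : (0:ℝ) ≤ b ^ 2 + 24 * a * c := by positivity
    have ht2 : t ^ 2 = b ^ 2 + 24 * a * c := Real.sq_sqrt hDnn
    have htb : b ≤ t := by
      nlinarith [Real.sqrt_nonneg (b ^ 2 + 24 * a * c)]
    have htpos : 0 < t := lt_of_lt_of_le hb htb
    have hc' : (c:ℝ) ≠ 0 := ne_of_gt hc
    set s := lamStar a b c with hs
    have hsval : s = (t - b) / (12 * c) := by rw [hs, lamStar]; ring
    have hs0 : 0 ≤ s := by
      rw [hsval]; exact div_nonneg (by linarith) (by positivity)
    have haval : a = (t ^ 2 - b ^ 2) / (24 * c) := by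
      field_simp; linarith [ht2]
    have hrel : a = 6 * c * s ^ 2 + b * s := by
      rw [hsval, haval]; field_simp; ring
    have hk : kconst a b c = (b + t) ^ 3 * (3 * t - b) / (6912 * c ^ 3) := by
      rw [kconst, sstar, ← hset, haval]; field_simp; ring
    have hgl : gfun a b c s = b * t ^ 3 / (432 * c ^ 3) := by
      rw [gfun, hk, hsval, haval]; field_simp; ring
    first
    | · intro lam hlam
        have hid : gfun a b c lam - gfun a b c s =
            (lam - s) ^ 2 * (9 * c * lam ^ 2 + (2 * b + 18 * c * s) * lam
              + (9 * c * s ^ 2 + b * s)) := by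
          rw [gfun, gfun]; linear_combination (-3 * lam ^ 2 + 3 * s ^ 2) * hrel
        nlinarith [sq_nonneg (lam - s), mul_nonneg hlam hs0,
          mul_nonneg (mul_nonneg hc.le hlam) hlam,
          mul_nonneg (mul_nonneg hc.le hs0) hs0, mul_nonneg hb.le hs0,
          mul_nonneg hb.le hlam, mul_nonneg (mul_nonneg hc.le hs0) hlam]
    | · rw [hgl]; positivity }

end
end
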